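/- arXiv:2012.12929 — 2 statements merged into one kernel-verified Lean document; each statement's English description precedes it below -/
import Mathlib

section
/- Let L ⊂ ℝ^n and A ⊂ ℝ^m be bimodular lattices and let U_A = (L × A) ∪ ((L' \ L) × (A' \ A)) ⊂ ℝ^{n+m} be the associated unimodular overlattice of L ⊕ A. Then the restriction map Char(U_A) → Char(L) is surjective: for every characteristic covector η of L there exists a characteristic covector ξ of U_A whose component in ℝ^n equals η. The same holds for the restriction map Char(U_A) → Char(A). -/
open scoped RealInnerProductSpace

noncomputable section

/-- The dual of a subset of Euclidean space: vectors pairing integrally with everything. -/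
def dualSet {n : ℕ} (Λ : Set (EuclideanSpace ℝ (Fin n))) : Set (EuclideanSpace ℝ (Fin n)) :=
  {x | ∀ v ∈ Λ, ∃ k : ℤ, ⟪x, v⟫ = (k : ℝ)}

/-- A (positive definite integral) lattice of full rank `n` in `ℝ^n`: an additive subgroup,
free abelian of rank `n` (it has a `ℤ`-basis indexed by `Fin n`), spanning `ℝ^n` over `ℝ`,
with all pairwise inner products integral. -/
def IsLattice {n : ℕ} (Λ : Set (EuclideanSpace ℝ (Fin n))) : Prop :=
  (0 ∈ Λ ∧ (∀ x ∈ Λ, ∀ y ∈ Λ, x + y ∈ Λ) ∧ (∀ x ∈ Λ, -x ∈ Λ)) ∧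
  (∃ b : Fin n → EuclideanSpace ℝ (Fin n),
      (∀ i, b i ∈ Λ) ∧ LinearIndependent ℤ b ∧
      ∀ x ∈ Λ, ∃ c : Fin n → ℤ, x = ∑ i, (c i : ℝ) • b i) ∧
  Submodule.span ℝ Λ = ⊤ ∧
  ∀ v ∈ Λ, ∀ w ∈ Λ, ∃ k : ℤ, ⟪v, w⟫ = (k : ℝ)

/-- A unimodular lattice: a lattice equal to its own dual. -/
def IsUnimodular {n : ℕ} (Λ : Set (EuclideanSpace ℝ (Fin n))) : Prop :=
  IsLattice Λ ∧ dualSet Λ = Λ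

/-- A bimodular lattice: a lattice of index 2 in its dual. -/
def IsBimodular {n : ℕ} (Λ : Set (EuclideanSpace ℝ (Fin n))) : Prop :=
  IsLattice Λ ∧
  ∃ w ∈ dualSet Λ \ Λ, ∀ x ∈ dualSet Λ, x ∈ Λ ∨ x - w ∈ Λ

/-- Characteristic covectors: elements `ξ` of the dual with `ξ·v ≡ v·v (mod 2)` for all `v ∈ Λ`. -/
def CharSet {n : ℕ} (Λ : Set (EuclideanSpace ℝ (Fin n))) : Set (EuclideanSpace ℝ (Fin n)) :=
  {ξ | ξ ∈ dualSet Λ ∧ ∀ v ∈ Λ, ∃ k : ℤ, ⟪ξ, v⟫ - ⟪v, v⟫ = 2 * (k : ℝ)}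

/-- `CharSign Λ ε` (for `ε = ±1`): characteristic covectors with `ξ·ξ ≡ n + ε (mod 8)`. -/
def CharSign {n : ℕ} (Λ : Set (EuclideanSpace ℝ (Fin n))) (ε : ℤ) :
    Set (EuclideanSpace ℝ (Fin n)) :=
  {ξ | ξ ∈ CharSet Λ ∧ ∃ k : ℤ, ⟪ξ, ξ⟫ = (n : ℝ) + (ε : ℝ) + 8 * (k : ℝ)}

/-- The defect `d(Λ) = min_{ξ ∈ Char(Λ)} (ξ·ξ − n)/4` of a full-rank lattice in `ℝ^n`. -/
def defect {n : ℕ} (Λ : Set (EuclideanSpace ℝ (Fin n))) : ℝ :=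
  sInf ((fun ξ => (⟪ξ, ξ⟫ - (n : ℝ)) / 4) '' CharSet Λ)

/-- The two defects `d_±(L) = min_{ξ ∈ Char_±(L)} (ξ·ξ − n)/4` of a bimodular lattice. -/
def defectSign {n : ℕ} (Λ : Set (EuclideanSpace ℝ (Fin n))) (ε : ℤ) : ℝ :=
  sInf ((fun ξ => (⟪ξ, ξ⟫ - (n : ℝ)) / 4) '' CharSign Λ ε)

/-- The juxtaposition `(x, y) ∈ ℝ^n × ℝ^m = ℝ^{n+m}`. -/
def pairE {n m : ℕ} (x : EuclideanSpace ℝ (Fin n)) (y : EuclideanSpace ℝ (Fin m)) :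
    EuclideanSpace ℝ (Fin (n + m)) :=
  (EuclideanSpace.equiv (Fin (n + m)) ℝ).symm
    (Fin.append (EuclideanSpace.equiv (Fin n) ℝ x) (EuclideanSpace.equiv (Fin m) ℝ y))

/-- The first component `ℝ^{n+m} → ℝ^n` of a covector. -/
def restFst {n m : ℕ} (ξ : EuclideanSpace ℝ (Fin (n + m))) : EuclideanSpace ℝ (Fin n) :=
  (EuclideanSpace.equiv (Fin n) ℝ).symm
    (fun i => EuclideanSpace.equiv (Fin (n + m)) ℝ ξ (Fin.castAdd m i))

/-- The second component `ℝ^{n+m} → ℝ^m` of a covector. -/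
def restSnd {n m : ℕ} (ξ : EuclideanSpace ℝ (Fin (n + m))) : EuclideanSpace ℝ (Fin m) :=
  (EuclideanSpace.equiv (Fin m) ℝ).symm
    (fun i => EuclideanSpace.equiv (Fin (n + m)) ℝ ξ (Fin.natAdd n i))

/-- The orthogonal direct sum `L ⊕ A ⊂ ℝ^{n+m}`, i.e. the subgroup `L × A`. -/
def prodSet {n m : ℕ} (L : Set (EuclideanSpace ℝ (Fin n))) (A : Set (EuclideanSpace ℝ (Fin m))) :
    Set (EuclideanSpace ℝ (Fin (n + m))) :=
  {z | ∃ x ∈ L, ∃ y ∈ A, z = pairE x y}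

/-- The overlattice `U_A = (L × A) ∪ ((L' \ L) × (A' \ A)) ⊂ ℝ^{n+m}`. -/
def overLattice {n m : ℕ} (L : Set (EuclideanSpace ℝ (Fin n)))
    (A : Set (EuclideanSpace ℝ (Fin m))) : Set (EuclideanSpace ℝ (Fin (n + m))) :=
  prodSet L A ∪ prodSet (dualSet L \ L) (dualSet A \ A)

/-- The standard lattice `I^n = ℤ^n ⊂ ℝ^n`. -/
def stdLattice (n : ℕ) : Set (EuclideanSpace ℝ (Fin n)) :=
  {x | ∀ i : Fin n, ∃ k : ℤ, x i = (k : ℝ)}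

/-- A lattice is diagonal if it admits a `ℤ`-basis with Gram matrix `diag(1, …, 1, 2)`,
i.e. it is isomorphic to `Δ_n = I^{n-1} ⊕ A_1`. -/
def IsDiagonal {n : ℕ} (Λ : Set (EuclideanSpace ℝ (Fin n))) : Prop :=
  ∃ b : Fin n → EuclideanSpace ℝ (Fin n),
    (∀ i, b i ∈ Λ) ∧ LinearIndependent ℤ b ∧
    (∀ x ∈ Λ, ∃ c : Fin n → ℤ, x = ∑ i, (c i : ℝ) • b i) ∧
    (∀ i j : Fin n, ⟪b i, b j⟫ =
      if i = j then (if (i : ℕ) = n - 1 then 2 else 1) else 0)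

/-- A lattice has an orthonormal `ℤ`-basis iff it is isomorphic to the standard lattice `I^n`. -/
def HasOrthonormalZBasis {n : ℕ} (Λ : Set (EuclideanSpace ℝ (Fin n))) : Prop :=
  ∃ b : Fin n → EuclideanSpace ℝ (Fin n),
    (∀ i, b i ∈ Λ) ∧ LinearIndependent ℤ b ∧
    (∀ x ∈ Λ, ∃ c : Fin n → ℤ, x = ∑ i, (c i : ℝ) • b i) ∧
    (∀ i j : Fin n, ⟪b i, b j⟫ = if i = j then 1 else 0)

/-!
A glue vector `w` of a bimodular lattice `Λ` (so that `Λ' = Λ ∪ (w + Λ)`) has `w·w ∈ ½ + ℤ`, since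
otherwise `w` would lie in `Λ'' = Λ`. Consequently every characteristic covector `θ` of `Λ` pairs
integrally with `w`, and `θ ↦ θ + 2w` flips the parity of `θ·w`. Since
`U_A = (L ⊕ A) ∪ ((w_L, w_A) + L ⊕ A)`, a pair `(η, θ)` of characteristic covectors is
characteristic for `U_A` as soon as `η·w_L + θ·w_A ≡ w_L·w_L + w_A·w_A (mod 2)`, and for a given `η`
this parity is met by a suitable choice of `θ`, and vice versa.
-/

section Lattice
variable {N : ℕ} {Λ : Set (EuclideanSpace ℝ (Fin N))}

lemma innerₗ_nondegenerate : (innerₗ (EuclideanSpace ℝ (Fin N))).Nondegenerate :=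
  ⟨fun x hx => inner_self_eq_zero.mp (hx x), fun y hy => inner_self_eq_zero.mp (hy y)⟩

lemma innerₗ_isSymm : LinearMap.BilinForm.IsSymm (innerₗ (EuclideanSpace ℝ (Fin N))) :=
  ⟨fun x y => real_inner_comm y x⟩

lemma dualSet_coe_submodule (K : Submodule ℤ (EuclideanSpace ℝ (Fin N))) :
    dualSet (K : Set (EuclideanSpace ℝ (Fin N))) =
      LinearMap.BilinForm.dualSubmodule (innerₗ (EuclideanSpace ℝ (Fin N))) K := by
  ext x
  simp only [dualSet, SetLike.mem_coe, LinearMap.BilinForm.mem_dualSubmodule,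
    Submodule.mem_one, innerₗ_apply_apply, algebraMap_int_eq, eq_intCast]
  exact forall₂_congr fun _ _ => exists_congr fun _ => eq_comm

lemma IsLattice.exists_basis (hΛ : IsLattice Λ) :
    ∃ B : Module.Basis (Fin N) ℝ (EuclideanSpace ℝ (Fin N)),
      Λ = Submodule.span ℤ (Set.range B) := by
  obtain ⟨⟨h0, hadd, hneg⟩, ⟨b, hbmem, -, hbrep⟩, hspan, -⟩ := hΛ
  let S : AddSubgroup (EuclideanSpace ℝ (Fin N)) :=
    { carrier := Λ, zero_mem' := h0, add_mem' := fun hx hy => hadd _ hx _ hy,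
      neg_mem' := fun hx => hneg _ hx }
  have hΛspan : Λ = Submodule.span ℤ (Set.range b) := by
    apply le_antisymm
    · intro x hx
      obtain ⟨c, rfl⟩ := hbrep x hx
      exact Submodule.sum_mem _ fun i _ => by
        rw [Int.cast_smul_eq_zsmul]
        exact Submodule.smul_mem _ _ (Submodule.subset_span (Set.mem_range_self i))
    · exact Submodule.span_le (p := S.toIntSubmodule).2 (Set.range_subset_iff.2 hbmem)
  have htop : ⊤ ≤ Submodule.span ℝ (Set.range b) := by
    rw [← hspan, hΛspan, Submodule.span_span_of_tower]
  refine ⟨basisOfTopLeSpanOfCardEqFinrank b htop (by simp), ?_⟩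
  rw [coe_basisOfTopLeSpanOfCardEqFinrank, hΛspan]

lemma IsLattice.dualSet_dualSet (hΛ : IsLattice Λ) : dualSet (dualSet Λ) = Λ := by
  obtain ⟨B, rfl⟩ := hΛ.exists_basis
  rw [dualSet_coe_submodule, dualSet_coe_submodule,
    LinearMap.BilinForm.dualSubmodule_dualSubmodule_of_basis _ innerₗ_nondegenerate innerₗ_isSymm]

/-- On an integral lattice `v ↦ v·v` is additive mod 2, so the characteristic condition only
needs to be checked on generators. -/
lemma mem_charSet_of_span {ι : Type*} {b : ι → EuclideanSpace ℝ (Fin N)}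
    (hint : ∀ v ∈ Λ, ∀ w ∈ Λ, ∃ k : ℤ, ⟪v, w⟫ = (k : ℝ))
    (hΛ : Λ = Submodule.span ℤ (Set.range b)) {ξ : EuclideanSpace ℝ (Fin N)}
    (hξ : ∀ i, ⟪ξ, b i⟫ = ⟪b i, b i⟫) : ξ ∈ CharSet Λ := by
  suffices h : ∀ v ∈ Λ, (∃ k : ℤ, ⟪ξ, v⟫ = (k : ℝ)) ∧ ∃ k : ℤ, ⟪ξ, v⟫ - ⟪v, v⟫ = 2 * (k : ℝ) from
    ⟨fun v hv => (h v hv).1, fun v hv => (h v hv).2⟩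
  subst hΛ
  have hmem : ∀ {w}, w ∈ AddSubgroup.closure (Set.range b) → w ∈ Submodule.span ℤ (Set.range b) :=
    fun hw => by rwa [← Submodule.span_int_eq_addSubgroupClosure] at hw
  intro v hv
  rw [SetLike.mem_coe, ← Submodule.mem_toAddSubgroup,
    Submodule.span_int_eq_addSubgroupClosure] at hv
  induction hv using AddSubgroup.closure_induction with
  | mem x hx =>
    obtain ⟨i, rfl⟩ := hx
    obtain ⟨k, hk⟩ := hint _ (hmem (AddSubgroup.subset_closure ⟨i, rfl⟩)) _
      (hmem (AddSubgroup.subset_closure ⟨i, rfl⟩))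
    exact ⟨⟨k, by rw [hξ, hk]⟩, ⟨0, by rw [hξ]; simp⟩⟩
  | zero => exact ⟨⟨0, by simp⟩, ⟨0, by simp⟩⟩
  | add x y hx hy ihx ihy =>
    obtain ⟨⟨a, ha⟩, ⟨a', ha'⟩⟩ := ihx
    obtain ⟨⟨c, hc⟩, ⟨c', hc'⟩⟩ := ihy
    obtain ⟨k, hk⟩ := hint x (hmem hx) y (hmem hy)
    refine ⟨⟨a + c, ?_⟩, ⟨a' + c' - k, ?_⟩⟩
    · rw [inner_add_right, ha, hc]; push_cast; ring
    · rw [inner_add_right, real_inner_add_add_self, hk]; push_cast; linarith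
  | neg x hx ihx =>
    obtain ⟨⟨a, ha⟩, ⟨a', ha'⟩⟩ := ihx
    obtain ⟨k, hk⟩ := hint x (hmem hx) x (hmem hx)
    refine ⟨⟨-a, ?_⟩, ⟨-a' - k, ?_⟩⟩
    · rw [inner_neg_right, ha]; push_cast; ring
    · rw [inner_neg_right, inner_neg_neg]; push_cast; linarith

lemma IsLattice.charSet_nonempty (hΛ : IsLattice Λ) : (CharSet Λ).Nonempty := by
  obtain ⟨B, hB⟩ := hΛ.exists_basis
  let d := LinearMap.BilinForm.dualBasis (innerₗ (EuclideanSpace ℝ (Fin N))) innerₗ_nondegenerate B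
  refine ⟨∑ i, ⟪B i, B i⟫ • d i, mem_charSet_of_span hΛ.2.2.2 hB fun j => ?_⟩
  have hd : ∀ i, ⟪d i, B j⟫ = if j = i then 1 else 0 :=
    fun i => LinearMap.BilinForm.apply_dualBasis_left innerₗ_nondegenerate B i j
  simp [sum_inner, real_inner_smul_left, hd]

end Lattice

def IsGlueVector {N : ℕ} (Λ : Set (EuclideanSpace ℝ (Fin N))) (w : EuclideanSpace ℝ (Fin N)) :
    Prop :=
  w ∈ dualSet Λ \ Λ ∧ ∀ x ∈ dualSet Λ, x ∈ Λ ∨ x - w ∈ Λ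

section Glue
variable {N : ℕ} {Λ : Set (EuclideanSpace ℝ (Fin N))} {w θ y : EuclideanSpace ℝ (Fin N)}

lemma add_add_mem_charSet (hθ : θ ∈ CharSet Λ) (hy : y ∈ dualSet Λ) :
    θ + (y + y) ∈ CharSet Λ := by
  refine ⟨fun v hv => ?_, fun v hv => ?_⟩
  · obtain ⟨k, hk⟩ := hθ.1 v hv
    obtain ⟨l, hl⟩ := hy v hv
    exact ⟨k + 2 * l, by rw [inner_add_left, inner_add_left, hk, hl]; push_cast; ring⟩
  · obtain ⟨k, hk⟩ := hθ.2 v hv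
    obtain ⟨l, hl⟩ := hy v hv
    exact ⟨k + l, by rw [inner_add_left, inner_add_left, hl]; push_cast; linarith⟩

namespace IsGlueVector

lemma add_self_mem (hw : IsGlueVector Λ w) : w + w ∈ Λ := by
  have hdual : w + w ∈ dualSet Λ := fun v hv => by
    obtain ⟨k, hk⟩ := hw.1.1 v hv
    exact ⟨k + k, by rw [inner_add_left, hk]; push_cast; ring⟩
  exact (hw.2 _ hdual).resolve_right (by simpa using hw.1.2)

lemma exists_inner_self_eq_add_half (hw : IsGlueVector Λ w) (hΛ : IsLattice Λ) :
    ∃ a : ℤ, ⟪w, w⟫ = a + 1 / 2 := by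
  obtain ⟨j, hj⟩ := hw.1.1 _ hw.add_self_mem
  rw [inner_add_right] at hj
  obtain ⟨a, rfl | rfl⟩ := Int.even_or_odd' j
  · refine absurd (hΛ.dualSet_dualSet ▸ fun x hx => ?_) hw.1.2
    rcases hw.2 x hx with hx | hx
    · exact hw.1.1 x hx
    · obtain ⟨k, hk⟩ := hw.1.1 _ hx
      refine ⟨k + a, ?_⟩
      rw [inner_sub_right] at hk
      push_cast at hj ⊢
      linarith
  · exact ⟨a, by push_cast at hj; linarith⟩

lemma exists_inner_eq_int_of_mem_charSet (hw : IsGlueVector Λ w) {a : ℤ} (ha : ⟪w, w⟫ = a + 1 / 2)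
    (hθ : θ ∈ CharSet Λ) : ∃ p : ℤ, ⟪θ, w⟫ = p := by
  obtain ⟨k, hk⟩ := hθ.2 _ hw.add_self_mem
  refine ⟨k + 2 * a + 1, ?_⟩
  rw [inner_add_right, real_inner_add_add_self, ha] at hk
  push_cast
  linarith

lemma exists_charSet_inner_eq (hw : IsGlueVector Λ w) (hΛ : IsLattice Λ) (s : ℤ) :
    ∃ θ ∈ CharSet Λ, ∃ k : ℤ, ⟪θ, w⟫ = s + 2 * k := by
  obtain ⟨a, ha⟩ := hw.exists_inner_self_eq_add_half hΛ
  obtain ⟨θ, hθ⟩ := hΛ.charSet_nonempty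
  obtain ⟨p, hp⟩ := hw.exists_inner_eq_int_of_mem_charSet ha hθ
  obtain ⟨r, hr | hr⟩ := Int.even_or_odd' (p - s)
  · exact ⟨θ, hθ, r, by rw [hp, show p = s + 2 * r by omega]; push_cast; ring⟩
  · refine ⟨θ + (w + w), add_add_mem_charSet hθ hw.1.1, r + a + 1, ?_⟩
    rw [inner_add_left, inner_add_left, hp, ha, show p = s + 2 * r + 1 by omega]
    push_cast
    ring

end IsGlueVector

end Glue

section Charset
variable {N : ℕ} {S T : Set (EuclideanSpace ℝ (Fin N))} {ξ g : EuclideanSpace ℝ (Fin N)}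

lemma charSet_anti (h : S ⊆ T) : CharSet T ⊆ CharSet S :=
  fun _ hξ => ⟨fun v hv => hξ.1 v (h hv), fun v hv => hξ.2 v (h hv)⟩

open scoped Pointwise in
lemma mem_charSet_union_vadd (hξ : ξ ∈ CharSet S) (hg : g ∈ dualSet S)
    (hξg : ∃ k : ℤ, ⟪ξ, g⟫ = k) (hξgg : ∃ k : ℤ, ⟪ξ, g⟫ - ⟪g, g⟫ = 2 * k) :
    ξ ∈ CharSet (S ∪ (g +ᵥ S)) := by
  obtain ⟨a, ha⟩ := hξg
  obtain ⟨b, hb⟩ := hξgg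
  refine ⟨?_, ?_⟩ <;> rintro z (hz | ⟨u, hu, rfl⟩)
  · exact hξ.1 z hz
  · obtain ⟨k, hk⟩ := hξ.1 u hu
    exact ⟨a + k, by dsimp only [vadd_eq_add]; rw [inner_add_right, ha, hk]; push_cast; ring⟩
  · exact hξ.2 z hz
  · obtain ⟨k, hk⟩ := hξ.2 u hu
    obtain ⟨l, hl⟩ := hg u hu
    refine ⟨b + k - l, ?_⟩
    dsimp only [vadd_eq_add]
    rw [inner_add_right, real_inner_add_add_self]
    push_cast
    linarith

end Charset

section Pair
variable {n m : ℕ}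

@[simp]
lemma pairE_castAdd (x : EuclideanSpace ℝ (Fin n)) (y : EuclideanSpace ℝ (Fin m)) (i : Fin n) :
    pairE x y (Fin.castAdd m i) = x i := by
  simp [pairE]

@[simp]
lemma pairE_natAdd (x : EuclideanSpace ℝ (Fin n)) (y : EuclideanSpace ℝ (Fin m)) (i : Fin m) :
    pairE x y (Fin.natAdd n i) = y i := by
  simp [pairE]

lemma restFst_pairE (x : EuclideanSpace ℝ (Fin n)) (y : EuclideanSpace ℝ (Fin m)) :
    restFst (pairE x y) = x := by
  ext i
  simp [restFst]

lemma restSnd_pairE (x : EuclideanSpace ℝ (Fin n)) (y : EuclideanSpace ℝ (Fin m)) :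
    restSnd (pairE x y) = y := by
  ext i
  simp [restSnd]

lemma pairE_add_pairE (a x : EuclideanSpace ℝ (Fin n)) (b y : EuclideanSpace ℝ (Fin m)) :
    pairE a b + pairE x y = pairE (a + x) (b + y) := by
  ext i
  refine Fin.addCases (fun i => ?_) (fun i => ?_) i <;> simp

lemma inner_pairE_pairE (a x : EuclideanSpace ℝ (Fin n)) (b y : EuclideanSpace ℝ (Fin m)) :
    ⟪pairE a b, pairE x y⟫ = ⟪a, x⟫ + ⟪b, y⟫ := by
  simp only [PiLp.inner_apply, Fin.sum_univ_add, pairE_castAdd, pairE_natAdd]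

variable {L : Set (EuclideanSpace ℝ (Fin n))} {A : Set (EuclideanSpace ℝ (Fin m))}

lemma pairE_mem_dualSet_prodSet {x : EuclideanSpace ℝ (Fin n)} {y : EuclideanSpace ℝ (Fin m)}
    (hx : x ∈ dualSet L) (hy : y ∈ dualSet A) : pairE x y ∈ dualSet (prodSet L A) := by
  rintro _ ⟨u, hu, v, hv, rfl⟩
  obtain ⟨k, hk⟩ := hx u hu
  obtain ⟨l, hl⟩ := hy v hv
  exact ⟨k + l, by rw [inner_pairE_pairE, hk, hl]; push_cast; ring⟩

lemma pairE_mem_charSet_prodSet {η : EuclideanSpace ℝ (Fin n)} {θ : EuclideanSpace ℝ (Fin m)}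
    (hη : η ∈ CharSet L) (hθ : θ ∈ CharSet A) : pairE η θ ∈ CharSet (prodSet L A) := by
  refine ⟨pairE_mem_dualSet_prodSet hη.1 hθ.1, ?_⟩
  rintro _ ⟨u, hu, v, hv, rfl⟩
  obtain ⟨k, hk⟩ := hη.2 u hu
  obtain ⟨l, hl⟩ := hθ.2 v hv
  exact ⟨k + l, by rw [inner_pairE_pairE, inner_pairE_pairE]; push_cast; linarith⟩

open scoped Pointwise in
lemma overLattice_subset {wL : EuclideanSpace ℝ (Fin n)} {wA : EuclideanSpace ℝ (Fin m)}
    (hwL : IsGlueVector L wL) (hwA : IsGlueVector A wA) :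
    overLattice L A ⊆ prodSet L A ∪ (pairE wL wA +ᵥ prodSet L A) := by
  rintro _ (hz | ⟨x, hx, y, hy, rfl⟩)
  · exact Or.inl hz
  · refine Or.inr ⟨pairE (x - wL) (y - wA), ⟨_, (hwL.2 x hx.1).resolve_left hx.2, _,
      (hwA.2 y hy.1).resolve_left hy.2, rfl⟩, ?_⟩
    dsimp only [vadd_eq_add]
    rw [pairE_add_pairE, add_sub_cancel, add_sub_cancel]

lemma pairE_mem_charSet_overLattice {wL η : EuclideanSpace ℝ (Fin n)}
    {wA θ : EuclideanSpace ℝ (Fin m)} (hwL : IsGlueVector L wL) (hwA : IsGlueVector A wA)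
    (hη : η ∈ CharSet L) (hθ : θ ∈ CharSet A) (hint : ∃ k : ℤ, ⟪η, wL⟫ + ⟪θ, wA⟫ = k)
    (hpar : ∃ k : ℤ, ⟪η, wL⟫ + ⟪θ, wA⟫ - (⟪wL, wL⟫ + ⟪wA, wA⟫) = 2 * k) :
    pairE η θ ∈ CharSet (overLattice L A) := by
  refine charSet_anti (overLattice_subset hwL hwA) (mem_charSet_union_vadd
    (pairE_mem_charSet_prodSet hη hθ) (pairE_mem_dualSet_prodSet hwL.1.1 hwA.1.1) ?_ ?_)
  · rwa [inner_pairE_pairE]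
  · rwa [inner_pairE_pairE, inner_pairE_pairE]

end Pair

/-- the restriction maps `Char(U_A) → Char(L)` and `Char(U_A) → Char(A)` are
surjective. -/
theorem stmt5 {n m : ℕ} (L : Set (EuclideanSpace ℝ (Fin n)))
    (A : Set (EuclideanSpace ℝ (Fin m))) (hL : IsBimodular L) (hA : IsBimodular A) :
    (∀ η ∈ CharSet L, ∃ ξ ∈ CharSet (overLattice L A), restFst ξ = η) ∧
    (∀ η ∈ CharSet A, ∃ ξ ∈ CharSet (overLattice L A), restSnd ξ = η) := by
  obtain ⟨hL, wL, hwL : IsGlueVector L wL⟩ := hL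
  obtain ⟨hA, wA, hwA : IsGlueVector A wA⟩ := hA
  obtain ⟨aL, haL⟩ := hwL.exists_inner_self_eq_add_half hL
  obtain ⟨aA, haA⟩ := hwA.exists_inner_self_eq_add_half hA
  constructor
  · intro η hη
    obtain ⟨p, hp⟩ := hwL.exists_inner_eq_int_of_mem_charSet haL hη
    obtain ⟨θ, hθ, k, hk⟩ := hwA.exists_charSet_inner_eq hA (aL + aA + 1 - p)
    refine ⟨pairE η θ, pairE_mem_charSet_overLattice hwL hwA hη hθ ⟨aL + aA + 1 + 2 * k, ?_⟩
      ⟨k, ?_⟩, restFst_pairE η θ⟩ <;>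
    · simp only [hp, hk, haL, haA]; push_cast; ring
  · intro θ hθ
    obtain ⟨p, hp⟩ := hwA.exists_inner_eq_int_of_mem_charSet haA hθ
    obtain ⟨η, hη, k, hk⟩ := hwL.exists_charSet_inner_eq hL (aL + aA + 1 - p)
    refine ⟨pairE η θ, pairE_mem_charSet_overLattice hwL hwA hη hθ ⟨aL + aA + 1 + 2 * k, ?_⟩
      ⟨k, ?_⟩, restSnd_pairE η θ⟩ <;>
    · simp only [hp, hk, haL, haA]; push_cast; ring
end
end

section
/- Let 0 → C → D → E → F → G → 0 be an exact sequence of finitely generated abelian groups in which E is finite of square-free order, the torsion subgroups of C and G have the same (finite) cardinality, and the torsion subgroups of D and F have the same (finite) cardinality. Then the map D → E is surjective, the induced map C/torsion → D/torsion is injective with finite cokernel, and the order of that cokernel equals |E|. -/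
/-!
Write `T` for torsion subgroups. Restricting `f₂` to `T D` gives `|T D| = |T C| · |f₂(T D)|`;
since `ker f₄` is finite, hence torsion, `f₄` maps `T F` onto `T G` and
`|T F| = |ker f₄| · |T G|`. The torsion hypotheses therefore force `|f₂(T D)| = |ker f₄|`. On the
other hand `|E| = |ker f₄| · |im f₂|` and `f₂(T D) ≤ im f₂`, so `|ker f₄|² ∣ |E|` and
square-freeness gives `ker f₄ = 0`. Hence `f₂` is onto and kills `T D`, so it descends to a
surjection `D/T D → E` whose kernel is the image of `C/T C`.
-/

open AddCommGroup (torsion)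

theorem AddSubgroup.card_eq_card_ker_inf_mul_card_map {A B : Type*} [AddGroup A] [AddGroup B]
    (H : AddSubgroup A) (f : A →+ B) :
    Nat.card H = Nat.card ↥(f.ker ⊓ H) * Nat.card ↥(H.map f) := by
  have hker : (f.comp H.subtype).ker = (f.ker ⊓ H).addSubgroupOf H := by
    rw [AddSubgroup.inf_addSubgroupOf_right, ← AddMonoidHom.comap_ker]; rfl
  rw [← (f.comp H.subtype).ker.card_mul_index, AddSubgroup.index_ker, AddMonoidHom.range_comp,
    AddSubgroup.range_subtype, hker,
    Nat.card_congr (AddSubgroup.addSubgroupOfEquivOfLe inf_le_right).toEquiv]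

theorem AddSubgroup.le_torsion_of_finite {G : Type*} [AddCommGroup G] (K : AddSubgroup G)
    [Finite K] : K ≤ torsion G :=
  fun x hx => K.subtype.isOfFinAddOrder (isOfFinAddOrder_of_finite (⟨x, hx⟩ : K))

theorem AddCommGroup.comap_torsion_of_finite_ker {G H : Type*} [AddCommGroup G] [AddCommGroup H]
    (f : G →+ H) [Finite f.ker] : (torsion H).comap f = torsion G := by
  refine le_antisymm (fun x hx => ?_) (le_comap_torsion f)
  obtain ⟨n, hn, hnx⟩ := isOfFinAddOrder_iff_nsmul_eq_zero.mp hx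
  have hker : n • x ∈ f.ker := by rw [AddMonoidHom.mem_ker, map_nsmul, hnx]
  exact (f.ker.le_torsion_of_finite hker).of_nsmul hn.ne'

theorem AddCommGroup.map_torsion_of_surjective_of_finite_ker {G H : Type*} [AddCommGroup G]
    [AddCommGroup H] {f : G →+ H} (hf : Function.Surjective f) [Finite f.ker] :
    (torsion G).map f = torsion H := by
  rw [← comap_torsion_of_finite_ker f, AddSubgroup.map_comap_eq_self_of_surjective hf]

theorem AddCommGroup.card_torsion_eq_card_torsion_mul_card_map_torsion {C D E : Type*}
    [AddCommGroup C] [AddCommGroup D] [AddCommGroup E] {f : C →+ D} {g : D →+ E}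
    (hf : Function.Injective f) (hfg : f.range = g.ker) :
    Nat.card (torsion D) = Nat.card (torsion C) * Nat.card ((torsion D).map g) := by
  rw [(torsion D).card_eq_card_ker_inf_mul_card_map g, ← hfg, ← AddSubgroup.map_comap_eq,
    comap_torsion_of_injective hf,
    ← Nat.card_congr ((torsion C).equivMapOfInjective f hf).toEquiv]

theorem AddCommGroup.card_torsion_eq_card_ker_mul_card_torsion {F G : Type*} [AddCommGroup F]
    [AddCommGroup G] {f : F →+ G} (hf : Function.Surjective f) [Finite f.ker] :
    Nat.card (torsion F) = Nat.card f.ker * Nat.card (torsion G) := by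
  rw [(torsion F).card_eq_card_ker_inf_mul_card_map f, inf_eq_left.mpr f.ker.le_torsion_of_finite,
    map_torsion_of_surjective_of_finite_ker hf]

theorem AddCommGroup.finite_torsion (G : Type*) [AddCommGroup G] [AddGroup.FG G] :
    Finite (torsion G) := by
  have : Module.Finite ℤ G := Module.Finite.iff_addGroup_fg.mpr ‹_›
  have := Module.finite_of_fg_torsion _ (Submodule.torsion_isTorsion (R := ℤ) (M := G))
  rw [← Submodule.torsion_int]
  exact this

theorem Submodule.natCard_torsion_int (G : Type*) [AddCommGroup G] :
    Nat.card (torsion ℤ G) = Nat.card (AddCommGroup.torsion G) := by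
  rw [← Submodule.torsion_int]; rfl

theorem AddMonoidHom.torsion_int_le_ker_of_map_torsion_eq_bot {G H : Type*} [AddCommGroup G]
    [AddCommGroup H] {f : G →+ H} (h : (torsion G).map f = ⊥) :
    Submodule.torsion ℤ G ≤ LinearMap.ker f.toIntLinearMap := fun x hx => by
  show f x ∈ (⊥ : AddSubgroup H)
  rw [← h]
  exact AddSubgroup.mem_map_of_mem f ((Submodule.torsion_int (G := G)).le hx)

theorem Submodule.comap_torsion_of_injective {R M N : Type*} [CommSemiring R] [AddCommMonoid M]
    [Module R M] [AddCommMonoid N] [Module R N] {f : M →ₗ[R] N} (hf : Function.Injective f) :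
    (torsion R N).comap f = torsion R M := by
  ext x
  simp only [mem_comap, mem_torsion_iff, Submonoid.smul_def, ← map_smul, map_eq_zero_iff f hf]

theorem Squarefree.isUnit_of_mul_of_dvd {R : Type*} [CommMonoid R] {a b : R}
    (h : Squarefree (a * b)) (hab : a ∣ b) : IsUnit a :=
  h a (mul_dvd_mul_left a hab)

section QuotientMaps

variable {R M N P : Type*} [Ring R] [AddCommGroup M] [Module R M] [AddCommGroup N] [Module R N]
  [AddCommGroup P] [Module R P] {p : Submodule R M} {q : Submodule R N}

theorem Submodule.injective_mapQ_of_comap_eq {f : M →ₗ[R] N} (h : q.comap f = p) :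
    Function.Injective (p.mapQ q f h.ge) := by
  rw [← LinearMap.ker_eq_bot, ker_mapQ, h, mkQ_map_self]

theorem Function.Exact.mapQ_liftQ {f : M →ₗ[R] N} {g : N →ₗ[R] P} (hfg : Function.Exact f g)
    (hp : p ≤ q.comap f) (hq : q ≤ LinearMap.ker g) :
    Function.Exact (p.mapQ q f hp) (q.liftQ g hq) := by
  rw [LinearMap.exact_iff, Submodule.ker_liftQ, Submodule.range_mapQ, hfg.linearMap_ker_eq]

noncomputable def Function.Exact.quotientRangeMapQEquiv {f : M →ₗ[R] N} {g : N →ₗ[R] P}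
    (hfg : Function.Exact f g) (hg : Function.Surjective g) (hp : p ≤ q.comap f)
    (hq : q ≤ LinearMap.ker g) : ((N ⧸ q) ⧸ LinearMap.range (p.mapQ q f hp)) ≃ₗ[R] P :=
  (hfg.mapQ_liftQ hp hq).linearEquivOfSurjective <| by
    rw [← LinearMap.range_eq_top, Submodule.range_liftQ, LinearMap.range_eq_top.mpr hg]

end QuotientMaps

theorem stmt13_general {C D E F G : Type*}
    [AddCommGroup C] [AddCommGroup D] [AddCommGroup E] [AddCommGroup F] [AddCommGroup G]
    [AddGroup.FG C]
    (f₁ : C →+ D) (f₂ : D →+ E) (f₃ : E →+ F) (f₄ : F →+ G)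
    (h₁ : Function.Injective f₁)
    (h₁₂ : f₁.range = f₂.ker) (h₂₃ : f₂.range = f₃.ker) (h₃₄ : f₃.range = f₄.ker)
    (h₄ : Function.Surjective f₄)
    (hEsq : Squarefree (Nat.card E))
    (hCG : Nat.card (Submodule.torsion ℤ C) = Nat.card (Submodule.torsion ℤ G))
    (hDF : Nat.card (Submodule.torsion ℤ D) = Nat.card (Submodule.torsion ℤ F)) :
    Function.Surjective f₂ ∧
    ∀ fbar : (C ⧸ Submodule.torsion ℤ C) →ₗ[ℤ] (D ⧸ Submodule.torsion ℤ D),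
      (∀ c : C, fbar (Submodule.Quotient.mk c) = Submodule.Quotient.mk (f₁ c)) →
      Function.Injective fbar ∧
      Finite ((D ⧸ Submodule.torsion ℤ D) ⧸ LinearMap.range fbar) ∧
      Nat.card ((D ⧸ Submodule.torsion ℤ D) ⧸ LinearMap.range fbar) = Nat.card E := by
  -- `Nat.card E = 0` if `E` is infinite, and `0` is not squarefree.
  have : Finite E := Nat.finite_of_card_ne_zero hEsq.ne_zero
  have : Finite f₄.ker := h₃₄ ▸ Finite.of_surjective _ f₃.rangeRestrict_surjective
  have : Finite (torsion C) := AddCommGroup.finite_torsion C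
  rw [Submodule.natCard_torsion_int, Submodule.natCard_torsion_int] at hCG hDF
  have hmap : Nat.card ((torsion D).map f₂) = Nat.card f₄.ker := by
    refine Nat.eq_of_mul_eq_mul_left (Nat.card_pos (α := torsion C)) ?_
    rw [← AddCommGroup.card_torsion_eq_card_torsion_mul_card_map_torsion h₁ h₁₂, hDF,
      AddCommGroup.card_torsion_eq_card_ker_mul_card_torsion h₄, ← hCG, mul_comm]
  have hcardE : Nat.card E = Nat.card f₄.ker * Nat.card f₂.range := by
    rw [← f₃.ker.card_mul_index, AddSubgroup.index_ker f₃, ← h₂₃, h₃₄, mul_comm]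
  have hker : Nat.card f₄.ker = 1 := Nat.isUnit_iff.mp <|
    Squarefree.isUnit_of_mul_of_dvd (hcardE ▸ hEsq)
      (hmap ▸ AddSubgroup.card_dvd_of_le ((torsion D).map_le_range f₂))
  have hf₂ : Function.Surjective f₂ := AddMonoidHom.range_eq_top.mp <|
    f₂.range.eq_top_of_card_eq (by rw [hcardE, hker, one_mul])
  have htors := AddMonoidHom.torsion_int_le_ker_of_map_torsion_eq_bot
    (AddSubgroup.card_eq_one.mp (hmap.trans hker))
  refine ⟨hf₂, fun fbar hfbar => ?_⟩
  have hcomap := Submodule.comap_torsion_of_injective (f := f₁.toIntLinearMap) h₁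
  obtain rfl : fbar = (Submodule.torsion ℤ C).mapQ _ f₁.toIntLinearMap hcomap.ge :=
    Submodule.linearMap_qext _ (LinearMap.ext hfbar)
  have hexact : Function.Exact f₁.toIntLinearMap f₂.toIntLinearMap :=
    AddMonoidHom.exact_iff.mpr h₁₂.symm
  let e := hexact.quotientRangeMapQEquiv hf₂ hcomap.ge htors
  exact ⟨Submodule.injective_mapQ_of_comap_eq hcomap, .of_equiv E e.symm.toEquiv,
    Nat.card_congr e.toEquiv⟩

/-- let `0 → C → D → E → F → G → 0` be an exact sequence of finitely generated
abelian groups with `E` finite of square-free order, `|torsion C| = |torsion G|`, and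
`|torsion D| = |torsion F|`. Then `D → E` is surjective, and the induced map
`C/torsion → D/torsion` is injective with finite cokernel of order `|E|`. -/
theorem stmt13 {C D E F G : Type*}
    [AddCommGroup C] [AddCommGroup D] [AddCommGroup E] [AddCommGroup F] [AddCommGroup G]
    [AddGroup.FG C] [AddGroup.FG D] [AddGroup.FG E] [AddGroup.FG F] [AddGroup.FG G]
    (f₁ : C →+ D) (f₂ : D →+ E) (f₃ : E →+ F) (f₄ : F →+ G)
    (h₁ : Function.Injective f₁)
    (h₁₂ : f₁.range = f₂.ker) (h₂₃ : f₂.range = f₃.ker) (h₃₄ : f₃.range = f₄.ker)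
    (h₄ : Function.Surjective f₄)
    (hE : Finite E) (hEsq : Squarefree (Nat.card E))
    (hCG : Nat.card (Submodule.torsion ℤ C) = Nat.card (Submodule.torsion ℤ G))
    (hDF : Nat.card (Submodule.torsion ℤ D) = Nat.card (Submodule.torsion ℤ F)) :
    Function.Surjective f₂ ∧
    ∀ fbar : (C ⧸ Submodule.torsion ℤ C) →ₗ[ℤ] (D ⧸ Submodule.torsion ℤ D),
      (∀ c : C, fbar (Submodule.Quotient.mk c) = Submodule.Quotient.mk (f₁ c)) →
      Function.Injective fbar ∧
      Finite ((D ⧸ Submodule.torsion ℤ D) ⧸ LinearMap.range fbar) ∧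
      Nat.card ((D ⧸ Submodule.torsion ℤ D) ⧸ LinearMap.range fbar) = Nat.card E :=
  stmt13_general f₁ f₂ f₃ f₄ h₁ h₁₂ h₂₃ h₃₄ h₄ hEsq hCG hDF
end
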